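/- Let k be an algebraically closed field of characteristic different from 2, and let q(x, y, z) = a·x² + b·y² + c·z² be a diagonal ternary quadratic form with nonzero coefficients a, b, c in the rational function field k(t). Then q has a nontrivial zero over k(t); that is, there exist u, v, w in k(t), not all zero, with a·u² + b·v² + c·w² = 0. -/

import Mathlib

/-!
Dividing by `a` and clearing denominators reduces the claim to the isotropy of
`x² + P y² + Q z²` over `k[t]` for nonzero polynomials `P`, `Q`, which is proved by descent on
`deg P + deg Q` (Legendre's argument). Assume `deg P ≤ deg Q`. A constant `P` is minus a square.
A square factor of `Q` can be absorbed into `x` and `y`. If `Q` is squarefree, then since `k` is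
algebraically closed, `-P` is a square modulo `Q`: `m² + P = Q D` with `deg m < deg Q`, hence
`deg D < deg Q`, and a zero of `x² + P y² + D z²` yields one of `x² + P y² + Q z²`.
-/

open Polynomial

def TernaryIsotropic {R : Type*} [CommRing R] (P Q : R) : Prop :=
  ∃ U V W : R, ¬(U = 0 ∧ V = 0 ∧ W = 0) ∧ U ^ 2 + P * V ^ 2 + Q * W ^ 2 = 0

namespace TernaryIsotropic

variable {R : Type*} [CommRing R]

theorem swap {P Q : R} (h : TernaryIsotropic P Q) : TernaryIsotropic Q P := by
  obtain ⟨U, V, W, hnt, heq⟩ := h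
  exact ⟨U, W, V, fun ⟨hU, hW, hV⟩ => hnt ⟨hU, hV, hW⟩, by linear_combination heq⟩

theorem of_isSquare_neg [Nontrivial R] {P : R} (Q : R) (h : IsSquare (-P)) :
    TernaryIsotropic P Q := by
  obtain ⟨m, hm⟩ := h
  exact ⟨m, 1, 0, by simp, by linear_combination -hm⟩

theorem map {S : Type*} [CommRing S] {P Q : R} (h : TernaryIsotropic P Q) {f : R →+* S}
    (hf : Function.Injective f) : TernaryIsotropic (f P) (f Q) := by
  obtain ⟨U, V, W, hnt, heq⟩ := h
  refine ⟨f U, f V, f W, ?_, by simpa using congrArg f heq⟩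
  simpa only [map_eq_zero_iff f hf] using hnt

variable [IsDomain R]

theorem mul_self_mul_right {P Q x : R} (h : TernaryIsotropic P Q) (hx : x ≠ 0) :
    TernaryIsotropic P (x * x * Q) := by
  obtain ⟨U, V, W, hnt, heq⟩ := h
  refine ⟨x * U, x * V, W, ?_, by linear_combination x ^ 2 * heq⟩
  rintro ⟨hU, hV, hW⟩
  exact hnt ⟨(mul_eq_zero.mp hU).resolve_left hx, (mul_eq_zero.mp hV).resolve_left hx, hW⟩

theorem of_mul_sq {P Q x y : R} (h : TernaryIsotropic (P * x ^ 2) (Q * y ^ 2)) (hx : x ≠ 0)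
    (hy : y ≠ 0) : TernaryIsotropic P Q := by
  obtain ⟨U, V, W, hnt, heq⟩ := h
  refine ⟨U, x * V, y * W, ?_, by linear_combination heq⟩
  rintro ⟨hU, hV, hW⟩
  exact hnt ⟨hU, (mul_eq_zero.mp hV).resolve_left hx, (mul_eq_zero.mp hW).resolve_left hy⟩

/-- The descent step: `(U m + P V)² + P (U - V m)² = (U² + P V²)(m² + P)` by multiplicativity
of the norm form `x² + P y²`. -/
theorem of_sq_add_eq_mul {P Q D m : R} (h : TernaryIsotropic P D) (hQ : Q ≠ 0) (hD : D ≠ 0)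
    (hm : m ^ 2 + P = Q * D) : TernaryIsotropic P Q := by
  obtain ⟨U, V, W, hnt, heq⟩ := h
  refine ⟨U * m + P * V, U - V * m, D * W, ?_,
    by linear_combination (Q * D) * heq + (U ^ 2 + P * V ^ 2) * hm⟩
  rintro ⟨h₁, h₂, h₃⟩
  have hV : V = 0 := by
    have : V * (Q * D) = 0 := by linear_combination h₁ - m * h₂ - V * hm
    exact (mul_eq_zero.mp this).resolve_right (mul_ne_zero hQ hD)
  exact hnt ⟨by simpa [hV] using h₂, hV, (mul_eq_zero.mp h₃).resolve_left hD⟩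

end TernaryIsotropic

theorem TernaryIsotropic.exists_of_div {K : Type*} [Field K] {a b c : K} (ha : a ≠ 0)
    (h : TernaryIsotropic (b / a) (c / a)) :
    ∃ u v w : K, ¬(u = 0 ∧ v = 0 ∧ w = 0) ∧ a * u ^ 2 + b * v ^ 2 + c * w ^ 2 = 0 := by
  obtain ⟨u, v, w, hnt, heq⟩ := h
  refine ⟨u, v, w, hnt, ?_⟩
  field_simp at heq
  linear_combination heq

namespace Polynomial

variable {k : Type*} [Field k]

theorem exists_eq_mul_self_mul_of_not_squarefree {Q : k[X]} (hQ : Q ≠ 0) (h : ¬Squarefree Q) :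
    ∃ x Q', Q = x * x * Q' ∧ 0 < x.natDegree ∧ Q' ≠ 0 := by
  obtain ⟨x, ⟨Q', rfl⟩, hx⟩ : ∃ x, x * x ∣ Q ∧ ¬IsUnit x := by simpa [Squarefree] using h
  have hx0 : x ≠ 0 := by rintro rfl; simp at hQ
  exact ⟨x, Q', rfl, natDegree_pos_iff_degree_pos.mpr (degree_pos_of_ne_zero_of_nonunit hx0 hx),
    right_ne_zero_of_mul hQ⟩

variable [IsAlgClosed k]

theorem dvd_of_squarefree_of_eval_roots {p F : k[X]} (hp : Squarefree p)
    (h : ∀ θ ∈ p.roots, F.eval θ = 0) : p ∣ F := by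
  rcases eq_or_ne F 0 with rfl | hF
  · exact dvd_zero p
  rw [IsAlgClosed.dvd_iff_roots_le_roots hp.ne_zero hF,
    Multiset.le_iff_subset (nodup_roots (PerfectField.separable_iff_squarefree.mpr hp))]
  exact fun θ hθ => (mem_roots hF).mpr (h θ hθ)

/-- Interpolate square roots of `-P` at the roots of `Q`. -/
theorem exists_sq_add_dvd {Q : k[X]} (hQ : Squarefree Q) (P : k[X]) :
    ∃ m : k[X], m.degree < Q.degree ∧ Q ∣ m ^ 2 + P := by
  classical
  choose r hr using fun θ : k => IsAlgClosed.exists_pow_nat_eq (-P.eval θ) two_pos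
  have hinj : Set.InjOn id (Q.roots.toFinset : Set k) := Set.injOn_id _
  refine ⟨Lagrange.interpolate Q.roots.toFinset id r, ?_, dvd_of_squarefree_of_eval_roots hQ ?_⟩
  · calc _ < (Q.roots.toFinset.card : WithBot ℕ) := Lagrange.degree_interpolate_lt _ hinj
      _ ≤ Q.natDegree := by exact_mod_cast (Multiset.toFinset_card_le _).trans (card_roots' Q)
      _ = Q.degree := (degree_eq_natDegree hQ.ne_zero).symm
  · intro θ hθ
    have := Lagrange.eval_interpolate_at_node r hinj (Multiset.mem_toFinset.mpr hθ)
    simp_all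

theorem ternaryIsotropic_of_squarefree {P Q : k[X]} (hQ : Squarefree Q)
    (hdeg : P.natDegree < 2 * Q.natDegree)
    (ih : ∀ D ≠ 0, D.natDegree < Q.natDegree → TernaryIsotropic P D) : TernaryIsotropic P Q := by
  obtain ⟨m, hmQ, D, hD⟩ := exists_sq_add_dvd hQ P
  rcases eq_or_ne D 0 with rfl | hD0
  · exact .of_isSquare_neg Q ⟨m, by linear_combination -hD⟩
  refine (ih D hD0 ?_).of_sq_add_eq_mul hQ.ne_zero hD0 hD
  have hm : m.natDegree < Q.natDegree := by
    rcases eq_or_ne m 0 with rfl | hm0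
    · rw [natDegree_zero]; omega
    · exact natDegree_lt_natDegree hm0 hmQ
  have : Q.natDegree + D.natDegree ≤ max (2 * m.natDegree) P.natDegree := by
    rw [← natDegree_mul hQ.ne_zero hD0, ← hD, ← natDegree_pow]
    exact natDegree_add_le _ _
  omega

theorem ternaryIsotropic {P Q : k[X]} (hP : P ≠ 0) (hQ : Q ≠ 0) : TernaryIsotropic P Q := by
  induction hn : P.natDegree + Q.natDegree using Nat.strong_induction_on generalizing P Q with
  | _ n ih =>
  wlog hle : P.natDegree ≤ Q.natDegree generalizing P Q
  · exact (this hQ hP (by omega) (by omega)).swap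
  rcases Nat.eq_zero_or_pos P.natDegree with hP0 | hP0
  · rw [eq_C_of_natDegree_eq_zero hP0]
    obtain ⟨r, hr⟩ := IsAlgClosed.exists_pow_nat_eq (-P.coeff 0) two_pos
    exact .of_isSquare_neg Q ⟨C r, by rw [← C_neg, ← hr, C_pow, sq]⟩
  by_cases hsq : Squarefree Q
  · exact ternaryIsotropic_of_squarefree hsq (by omega)
      fun D hD hdeg => ih _ (by omega) hP hD rfl
  · obtain ⟨x, Q', rfl, hx, hQ'⟩ := exists_eq_mul_self_mul_of_not_squarefree hQ hsq
    have hx0 : x ≠ 0 := ne_zero_of_natDegree_gt hx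
    rw [natDegree_mul (mul_ne_zero hx0 hx0) hQ', natDegree_mul hx0 hx0] at hn
    exact (ih _ (by omega) hP hQ' rfl).mul_self_mul_right hx0

end Polynomial

theorem RatFunc.mul_algebraMap_denom_sq {k : Type*} [Field k] (β : RatFunc k) :
    β * algebraMap k[X] (RatFunc k) β.denom ^ 2 =
      algebraMap k[X] (RatFunc k) (β.num * β.denom) := by
  have h := β.num_div_denom
  rw [div_eq_iff (RatFunc.algebraMap_ne_zero β.denom_ne_zero)] at h
  rw [map_mul, h]
  ring

theorem stmt_13_general (k : Type*) [Field k] [IsAlgClosed k]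
    (a b c : RatFunc k) (ha : a ≠ 0) (hb : b ≠ 0) (hc : c ≠ 0) :
    ∃ u v w : RatFunc k, ¬(u = 0 ∧ v = 0 ∧ w = 0) ∧
      a * u ^ 2 + b * v ^ 2 + c * w ^ 2 = 0 := by
  set β := b / a
  set γ := c / a
  have key := (Polynomial.ternaryIsotropic
    (mul_ne_zero (RatFunc.num_ne_zero (div_ne_zero hb ha)) β.denom_ne_zero)
    (mul_ne_zero (RatFunc.num_ne_zero (div_ne_zero hc ha)) γ.denom_ne_zero)).map
    (RatFunc.algebraMap_injective k)
  rw [← β.mul_algebraMap_denom_sq, ← γ.mul_algebraMap_denom_sq] at key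
  exact (key.of_mul_sq (RatFunc.algebraMap_ne_zero β.denom_ne_zero)
    (RatFunc.algebraMap_ne_zero γ.denom_ne_zero)).exists_of_div ha

/-- Tsen's theorem for conics: a diagonal ternary quadratic form with nonzero
coefficients over `k(t)`, `k` algebraically closed of characteristic ≠ 2, has a
nontrivial zero. -/
theorem stmt_13 (k : Type*) [Field k] [IsAlgClosed k] (hchar : ringChar k ≠ 2)
    (a b c : RatFunc k) (ha : a ≠ 0) (hb : b ≠ 0) (hc : c ≠ 0) :
    ∃ u v w : RatFunc k, ¬(u = 0 ∧ v = 0 ∧ w = 0) ∧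
      a * u ^ 2 + b * v ^ 2 + c * w ^ 2 = 0 :=
  stmt_13_general k a b c ha hb hc
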